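/- Let J be a 2-torsion free Jordan ring with nontrivial idempotent e satisfying conditions (i)–(iii), and φ : J → J' a bijective n-multiplicative isomorphism onto a Jordan ring J'. Then φ is additive on J₁: φ(a + b) = φ(a) + φ(b) for all a, b ∈ J₁. -/

import Mathlib

/-- Peirce 1-component relative to `e`: elements `x` with `e*x = x`. -/
def peirce1 {J : Type*} [Mul J] (e : J) : Set J := {x | e * x = x}

/-- Peirce 1/2-component relative to `e`: elements `x` with `e*x = (1/2)x`, i.e. `e*x + e*x = x`. -/
def peirceHalf {J : Type*} [Mul J] [Add J] (e : J) : Set J := {x | e * x + e * x = x}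

/-- Peirce 0-component relative to `e`: elements `x` with `e*x = 0`. -/
def peirce0 {J : Type*} [Mul J] [Zero J] (e : J) : Set J := {x | e * x = 0}

/-- The right-normed nonassociative monomial `x₁(x₂(⋯(x_{n-1}x_n)⋯))` on a list of arguments. -/
def rnm {J : Type*} [Mul J] [Zero J] : List J → J
  | [] => 0
  | [x] => x
  | x :: y :: l => x * rnm (y :: l)

/-- `φ` is an `n`-multiplicative map (w.r.t. the right-normed monomial of degree `n`). -/
def IsNMulMap {J J' : Type*} [Mul J] [Zero J] [Mul J'] [Zero J'] (n : ℕ) (φ : J → J') : Prop :=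
  ∀ l : List J, l.length = n → φ (rnm l) = rnm (l.map φ)

/-!
Write `L` for left multiplication by `e`. The linearized Jordan identity gives the Peirce rules:
`L (2L - 1) (L - 1) = 0`, so every element splits uniquely as `c₁ + c_½ + c₀`, and
`J₀ J₁ = 0`, `J₀ J₀ ⊆ J₀`, `J_½ J₁ + J_½ J₀ ⊆ J_½`, `e (J_½ J_½) ⊆ J₁`.

If `φ c = φ a + φ b`, then `n`-multiplicativity in the last slot gives
`φ (x₁ (⋯ (x_{n-1} c))) = φ (x₁ (⋯ a)) + φ (x₁ (⋯ b))`. Choosing the `xᵢ` among `e`, `J₀` and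
`J_½`, bijectivity and conditions (i)–(iii) pin down the Peirce components of `c`. This gives
additivity first on `J₁ + J_½` and on `J₀ + J_½`; for `a, b ∈ J₁` it then gives
`u (t (c - a - b)) = 0` for all `t ∈ J_½`, `u ∈ J₀`, whence `c = a + b`.
-/

local notation "L" => AddMonoid.End.mulLeft

-- Mathlib's `AddMonoid.End.mulLeft_apply_apply` does not fire on these terms.
@[simp] theorem mulLeft_apply {J : Type*} [NonUnitalNonAssocSemiring J] (a x : J) :
    L a x = a * x := rfl

attribute [local instance] LieRing.ofAssociativeRing in
theorem IsCommJordan.linearized {A : Type*} [NonUnitalNonAssocCommRing A] [IsCommJordan A]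
    (h2 : ∀ x : A, x + x = 0 → x = 0) (a b c y : A) :
    a * ((b * c) * y) + b * ((c * a) * y) + c * ((a * b) * y)
      = (b * c) * (a * y) + (c * a) * (b * y) + (a * b) * (c * y) := by
  have h := congrArg (· y) (two_nsmul_lie_lmul_lmul_add_add_eq_zero a b c)
  have add_apply (f g : AddMonoid.End A) : (f + g) y = f y + g y := rfl
  have sub_apply (f g : AddMonoid.End A) : (f - g) y = f y - g y := rfl
  simp only [Ring.lie_def, two_nsmul, add_apply, sub_apply, AddMonoid.End.coe_mul,
    Function.comp_apply, mulLeft_apply, AddMonoid.End.zero_apply] at h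
  rw [← sub_eq_zero]
  exact h2 _ (by rw [← h]; abel)

section PeirceSpaces
variable {J : Type*} [NonUnitalNonAssocRing J]

def peirce1AddSubgroup (e : J) : AddSubgroup J where
  carrier := peirce1 e
  add_mem' {x y} (hx : e * x = x) (hy : e * y = y) := show e * (x + y) = x + y by
    rw [mul_add, hx, hy]
  zero_mem' := mul_zero e
  neg_mem' {x} (hx : e * x = x) := show e * -x = -x by rw [mul_neg, hx]

def peirceHalfAddSubgroup (e : J) : AddSubgroup J where
  carrier := peirceHalf e
  add_mem' {x y} (hx : e * x + e * x = x) (hy : e * y + e * y = y) :=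
    show e * (x + y) + e * (x + y) = x + y by rw [mul_add, add_add_add_comm, hx, hy]
  zero_mem' := show e * 0 + e * 0 = 0 by rw [mul_zero, add_zero]
  neg_mem' {x} (hx : e * x + e * x = x) := show e * -x + e * -x = -x by
    rw [mul_neg, ← neg_add, hx]

def peirce0AddSubgroup (e : J) : AddSubgroup J where
  carrier := peirce0 e
  add_mem' {x y} (hx : e * x = 0) (hy : e * y = 0) := show e * (x + y) = 0 by
    rw [mul_add, hx, hy, add_zero]
  zero_mem' := mul_zero e
  neg_mem' {x} (hx : e * x = 0) := show e * -x = 0 by rw [mul_neg, hx, neg_zero]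

variable {e : J}

theorem peirce_eq_zero_of_add_add_eq_zero {x₁ xh x₀ : J} (hx₁ : x₁ ∈ peirce1 e)
    (hxh : xh ∈ peirceHalf e) (hx₀ : x₀ ∈ peirce0 e) (h : x₁ + xh + x₀ = 0) :
    x₁ = 0 ∧ xh = 0 ∧ x₀ = 0 := by
  have hx₁ : e * x₁ = x₁ := hx₁
  have hxh : e * xh + e * xh = xh := hxh
  have hx₀ : e * x₀ = 0 := hx₀
  have hL : x₁ + e * xh = 0 := by
    simpa only [mul_add, hx₁, hx₀, add_zero, mul_zero] using congrArg (e * ·) h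
  have hLL : x₁ + e * (e * xh) = 0 := by
    simpa only [mul_add, hx₁, mul_zero] using congrArg (e * ·) hL
  have hLh : e * (e * xh) + e * (e * xh) = e * xh := by rw [← mul_add, hxh]
  have hexh : e * xh = 0 := by
    rw [← add_left_cancel (hL.trans hLL.symm)] at hLh
    exact add_eq_left.mp hLh
  have hxh0 : xh = 0 := by rw [← hxh, hexh, add_zero]
  have hx₁0 : x₁ = 0 := by rwa [hexh, add_zero] at hL
  exact ⟨hx₁0, hxh0, by rwa [hx₁0, hxh0, zero_add, zero_add] at h⟩

theorem peirce_eq_of_add_add_eq {x₁ y₁ xh yh x₀ y₀ : J} (hx₁ : x₁ ∈ peirce1 e)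
    (hy₁ : y₁ ∈ peirce1 e) (hxh : xh ∈ peirceHalf e) (hyh : yh ∈ peirceHalf e)
    (hx₀ : x₀ ∈ peirce0 e) (hy₀ : y₀ ∈ peirce0 e) (h : x₁ + xh + x₀ = y₁ + yh + y₀) :
    x₁ = y₁ ∧ xh = yh ∧ x₀ = y₀ := by
  have hsub := peirce_eq_zero_of_add_add_eq_zero ((peirce1AddSubgroup e).sub_mem hx₁ hy₁)
    ((peirceHalfAddSubgroup e).sub_mem hxh hyh) ((peirce0AddSubgroup e).sub_mem hx₀ hy₀)
    (by rw [← sub_eq_zero] at h; rw [← h]; abel)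
  simpa only [sub_eq_zero] using hsub

theorem pow_apply_of_mem_peirce1 {a : J} (ha : a ∈ peirce1 e) (k : ℕ) : (L e ^ k) a = a := by
  rw [AddMonoid.End.coe_pow]
  exact Function.iterate_fixed ha k

theorem pow_apply_of_mem_peirce0 {w : J} (hw : w ∈ peirce0 e) {k : ℕ} (hk : k ≠ 0) :
    (L e ^ k) w = 0 := by
  obtain ⟨j, rfl⟩ := Nat.exists_eq_succ_of_ne_zero hk
  rw [pow_succ, AddMonoid.End.coe_mul, Function.comp_apply]
  exact (congrArg (L e ^ j) hw).trans (map_zero _)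

theorem pow_apply_eq_of_mul_mem_peirce1 {z : J} (hz : e * z ∈ peirce1 e) {k : ℕ}
    (hk : k ≠ 0) : (L e ^ k) z = e * z := by
  obtain ⟨j, rfl⟩ := Nat.exists_eq_succ_of_ne_zero hk
  rw [pow_succ, AddMonoid.End.coe_mul, Function.comp_apply]
  exact pow_apply_of_mem_peirce1 hz j

theorem mapsTo_mulLeft_peirceHalf : Set.MapsTo (L e) (peirceHalf e) (peirceHalf e) :=
  fun t (ht : e * t + e * t = t) => show e * (e * t) + e * (e * t) = e * t by rw [← mul_add, ht]

theorem injOn_mulLeft_peirceHalf : Set.InjOn (L e) (peirceHalf e) := by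
  intro s (hs : e * s + e * s = s) t (ht : e * t + e * t = t) (h : e * s = e * t)
  rw [← hs, ← ht, h]

theorem surjOn_mulLeft_peirceHalf : Set.SurjOn (L e) (peirceHalf e) (peirceHalf e) :=
  fun t ht => ⟨t + t, (peirceHalfAddSubgroup e).add_mem ht ht, (mul_add e t t).trans ht⟩

theorem pow_apply_mem_peirceHalf {t : J} (ht : t ∈ peirceHalf e) (k : ℕ) :
    (L e ^ k) t ∈ peirceHalf e := by
  rw [AddMonoid.End.coe_pow]
  exact mapsTo_mulLeft_peirceHalf.iterate k ht

theorem eq_zero_of_pow_apply_eq_zero {t : J} (ht : t ∈ peirceHalf e) {k : ℕ}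
    (h : (L e ^ k) t = 0) : t = 0 := by
  rw [AddMonoid.End.coe_pow] at h
  refine injOn_mulLeft_peirceHalf.iterate mapsTo_mulLeft_peirceHalf k ht
    (peirceHalfAddSubgroup e).zero_mem ?_
  rw [h, iterate_map_zero]

theorem exists_pow_apply_eq {t : J} (ht : t ∈ peirceHalf e) (k : ℕ) :
    ∃ s ∈ peirceHalf e, (L e ^ k) s = t := by
  rw [AddMonoid.End.coe_pow]
  exact surjOn_mulLeft_peirceHalf.iterate k ht

end PeirceSpaces

section MulLeftList
variable {J : Type*} [NonUnitalNonAssocRing J]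

def mulLeftList (q : List J) : AddMonoid.End J := (q.map L).prod

@[simp] theorem mulLeftList_nil : mulLeftList ([] : List J) = 1 := rfl

@[simp] theorem mulLeftList_cons (u : J) (q : List J) :
    mulLeftList (u :: q) = L u * mulLeftList q := by
  simp [mulLeftList]

@[simp] theorem mulLeftList_append (p q : List J) :
    mulLeftList (p ++ q) = mulLeftList p * mulLeftList q := by
  simp [mulLeftList]

@[simp] theorem mulLeftList_replicate (k : ℕ) (e : J) :
    mulLeftList (List.replicate k e) = L e ^ k := by
  simp [mulLeftList]

theorem rnm_append_singleton (q : List J) (x : J) : rnm (q ++ [x]) = mulLeftList q x := by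
  induction q with
  | nil => rfl
  | cons u q ih =>
    cases q with
    | nil => rfl
    | cons v q => exact congrArg (u * ·) ih

theorem mulLeftList_apply_mem {T S : Set J} (hS : ∀ t ∈ T, ∀ x ∈ S, t * x ∈ S) {q : List J}
    (hq : ∀ t ∈ q, t ∈ T) {x : J} (hx : x ∈ S) : mulLeftList q x ∈ S := by
  induction q with
  | nil => exact hx
  | cons u q ih =>
    exact hS u (hq u List.mem_cons_self) _ (ih fun t ht => hq t (List.mem_cons_of_mem u ht))

theorem eq_zero_of_forall_mulLeftList_apply_eq_zero {T S : Set J}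
    (hS : ∀ t ∈ T, ∀ x ∈ S, t * x ∈ S) (hT : ∀ x ∈ S, (∀ t ∈ T, t * x = 0) → x = 0) (k : ℕ)
    {x : J} (hx : x ∈ S)
    (h : ∀ q : List J, q.length = k → (∀ t ∈ q, t ∈ T) → mulLeftList q x = 0) : x = 0 := by
  induction k generalizing x with
  | zero => exact h [] rfl (by simp)
  | succ k ih =>
    refine hT x hx fun t ht => ih (hS t ht x hx) fun q hq hqT => ?_
    simpa using h (q ++ [t]) (by simp [hq]) (by simpa [or_imp, forall_and] using ⟨hqT, ht⟩)

end MulLeftList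

namespace IsNMulMap
variable {J J' : Type*} [NonUnitalNonAssocRing J] [NonUnitalNonAssocRing J'] {n : ℕ}
  {φ : J → J'} (hmul : IsNMulMap n φ)
include hmul

theorem map_mulLeftList {q : List J} (hq : q.length + 1 = n) (x : J) :
    φ (mulLeftList q x) = mulLeftList (q.map φ) (φ x) := by
  rw [← rnm_append_singleton, hmul _ (by simpa using hq), List.map_append, List.map_singleton,
    rnm_append_singleton]

theorem map_mulLeftList_of_map_eq_add {a b c : J} (h : φ c = φ a + φ b) {q : List J}
    (hq : q.length + 1 = n) :
    φ (mulLeftList q c) = φ (mulLeftList q a) + φ (mulLeftList q b) := by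
  rw [hmul.map_mulLeftList hq, h, map_add, hmul.map_mulLeftList hq, hmul.map_mulLeftList hq]

theorem map_zero (hn : 2 ≤ n) (hφ : Function.Surjective φ) : φ 0 = 0 := by
  obtain ⟨z, hz⟩ := hφ 0
  obtain ⟨k, rfl⟩ : ∃ k, n = k + 2 := ⟨n - 2, by omega⟩
  have h := hmul.map_mulLeftList (q := List.replicate (k + 1) 0) (by simp) z
  simpa [pow_succ', hz] using h

/-- For `n = 2` the exponent `n - 3` truncates to `0`, and this reads
`φ (u * (x * y)) = φ u * (φ x * φ y)`. -/
theorem map_mul_mul_pow_apply (hn : 2 ≤ n) (e u x y : J) :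
    φ (u * (x * (L e ^ (n - 3)) y)) = φ u * (φ x * (L (φ e) ^ (n - 3)) (φ y)) := by
  rcases Nat.lt_or_ge n 3 with hn3 | hn3
  · have hmul2 (x y : J) : φ (x * y) = φ x * φ y := hmul [x, y] (by simp; omega)
    simp [show n - 3 = 0 by omega, hmul2]
  · simpa using hmul.map_mulLeftList (q := u :: x :: List.replicate (n - 3) e)
      (by simp; omega) y

theorem map_mul_mul_pow_apply_of_map_eq_add (hn : 2 ≤ n) {a b c : J} (h : φ c = φ a + φ b)
    (e u x : J) :
    φ (u * (x * (L e ^ (n - 3)) c))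
      = φ (u * (x * (L e ^ (n - 3)) a)) + φ (u * (x * (L e ^ (n - 3)) b)) := by
  simp only [hmul.map_mul_mul_pow_apply hn, h, map_add, mul_add]

end IsNMulMap

section PeirceRules
variable {J : Type*} [NonUnitalNonAssocCommRing J] [IsCommJordan J]
  (h2 : ∀ x : J, x + x = 0 → x = 0) {e : J} (hid : e * e = e)
include h2 hid

theorem exists_peirce_decomposition (c : J) :
    ∃ c₁ ∈ peirce1 e, ∃ ch ∈ peirceHalf e, ∃ c₀ ∈ peirce0 e, c = c₁ + ch + c₀ := by
  have h := IsCommJordan.linearized h2 e e c e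
  rw [mul_comm c e, hid, hid, mul_comm (e * c) e, mul_comm c e] at h
  -- `h` says `L (2L - 1) (L - 1) c = 0` for `L = (e * ·)`; the summands are the Lagrange
  -- projections `L (2L - 1)`, `-4 L (L - 1)`, `(2L - 1) (L - 1)` applied to `c`.
  refine ⟨2 • (e * (e * c)) - e * c, ?_, 4 • (e * c - e * (e * c)), ?_,
    c - 3 • (e * c) + 2 • (e * (e * c)), ?_, by abel⟩
  · show _ = _
    simp only [mul_sub, mul_smul_comm]
    linear_combination (norm := abel1) h
  · show _ = _
    simp only [mul_sub, mul_smul_comm]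
    linear_combination (norm := abel1) (-4 : ℤ) • h
  · show _ = _
    simp only [mul_add, mul_sub, mul_smul_comm]
    linear_combination (norm := abel1) h

theorem mul_left_comm_of_mem_peirce1 {a : J} (ha : a ∈ peirce1 e) (y : J) :
    e * (a * y) = a * (e * y) := by
  have h := IsCommJordan.linearized h2 e e a y
  rw [mul_comm a e, show e * a = a from ha, hid] at h
  linear_combination (norm := abel1) h

theorem mul_left_comm_of_mem_peirce0 {w : J} (hw : w ∈ peirce0 e) (y : J) :
    e * (w * y) = w * (e * y) := by
  have h := IsCommJordan.linearized h2 e e w y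
  rw [mul_comm w e, show e * w = 0 from hw, hid] at h
  simpa only [zero_mul, mul_zero, zero_add] using h.symm

theorem mul_eq_zero_of_mem_peirce0_of_mem_peirce1 {w a : J} (hw : w ∈ peirce0 e)
    (ha : a ∈ peirce1 e) : w * a = 0 :=
  calc w * a = w * (e * a) := by rw [show e * a = a from ha]
    _ = a * (e * w) := by
      rw [← mul_left_comm_of_mem_peirce0 h2 hid hw, mul_comm w a,
        mul_left_comm_of_mem_peirce1 h2 hid ha]
    _ = 0 := by rw [show e * w = 0 from hw, mul_zero]

theorem mul_mem_peirce0 {w y : J} (hw : w ∈ peirce0 e) (hy : e * y ∈ peirce1 e) :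
    w * y ∈ peirce0 e :=
  (mul_left_comm_of_mem_peirce0 h2 hid hw y).trans
    (mul_eq_zero_of_mem_peirce0_of_mem_peirce1 h2 hid hw hy)

theorem mul_mem_peirce1 {a b : J} (ha : a ∈ peirce1 e) (hb : b ∈ peirce1 e) :
    a * b ∈ peirce1 e :=
  (mul_left_comm_of_mem_peirce1 h2 hid ha b).trans (congrArg (a * ·) hb)

theorem mul_mem_peirceHalf_of_mem_peirce1 {t a : J} (ht : t ∈ peirceHalf e)
    (ha : a ∈ peirce1 e) : t * a ∈ peirceHalf e := by
  show e * (t * a) + e * (t * a) = t * a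
  rw [mul_comm t a, mul_left_comm_of_mem_peirce1 h2 hid ha, ← mul_add,
    show e * t + e * t = t from ht]

theorem mul_mem_peirceHalf_of_mem_peirce0 {t w : J} (ht : t ∈ peirceHalf e)
    (hw : w ∈ peirce0 e) : t * w ∈ peirceHalf e := by
  show e * (t * w) + e * (t * w) = t * w
  rw [mul_comm t w, mul_left_comm_of_mem_peirce0 h2 hid hw, ← mul_add,
    show e * t + e * t = t from ht]

theorem mul_mul_mem_peirce1_of_mem_peirceHalf {s t : J} (hs : s ∈ peirceHalf e)
    (ht : t ∈ peirceHalf e) : e * (s * t) ∈ peirce1 e := by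
  have hs : e * s + e * s = s := hs
  have ht : e * t + e * t = t := ht
  have hs' : e * (e * s) + e * (e * s) = e * s := by rw [← mul_add, hs]
  have ht' : e * (e * t) + e * (e * t) = e * t := by rw [← mul_add, ht]
  have hst : s * (e * (e * t)) = (e * s) * (e * t) :=
    calc s * (e * (e * t)) = (e * s + e * s) * (e * (e * t)) := by rw [hs]
      _ = e * s * (e * (e * t) + e * (e * t)) := by rw [add_mul, mul_add]
      _ = _ := by rw [ht']
  have hts : t * (e * (e * s)) = (e * t) * (e * s) :=
    calc t * (e * (e * s)) = (e * t + e * t) * (e * (e * s)) := by rw [ht]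
      _ = e * t * (e * (e * s) + e * (e * s)) := by rw [add_mul, mul_add]
      _ = _ := by rw [hs']
  have h := IsCommJordan.linearized h2 e s t e
  rw [hid, mul_comm t e, mul_comm s e, mul_comm (s * t) e, mul_comm (e * t) e,
    mul_comm (e * s) e] at h
  show e * (e * (s * t)) = e * (s * t)
  linear_combination (norm := abel1) h - hst - hts

theorem mulLeftList_apply_eq_zero_of_mem_peirce1 {q : List J} (hne : q ≠ [])
    (hq : ∀ u ∈ q, u ∈ peirce0 e) {a : J} (ha : a ∈ peirce1 e) : mulLeftList q a = 0 := by
  obtain ⟨p, u, rfl⟩ := (List.eq_nil_or_concat q).resolve_left hne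
  rw [List.concat_eq_append] at hq ⊢
  simp [mul_eq_zero_of_mem_peirce0_of_mem_peirce1 h2 hid (hq u (by simp)) ha]

end PeirceRules

section Additivity
variable {J J' : Type*} [NonUnitalNonAssocCommRing J] [IsCommJordan J] [NonUnitalNonAssocRing J']
  (h2 : ∀ x : J, x + x = 0 → x = 0) {e : J} (hid : e * e = e) {n : ℕ} (hn : 2 ≤ n) {φ : J → J'}
  (hbij : Function.Bijective φ) (hmul : IsNMulMap n φ)
include h2 hid hn hbij hmul

theorem eq_zero_of_map_add_add_eq
    (hcond3 : ∀ a ∈ peirceHalf e, (∀ t ∈ peirce0 e, t * a = 0) → a = 0)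
    {A D Z : J} (hD : D ∈ peirceHalf e) (hZ : e * Z ∈ peirce1 e)
    (h : φ (A + D + Z) = φ A + φ Z) : D = 0 := by
  have hφ0 := hmul.map_zero hn hbij.surjective
  -- Padding with `e` turns `Z` into `e * Z ∈ J₁`, which every `u ∈ J₀` then annihilates.
  have hpad := hmul.map_mulLeftList_of_map_eq_add h (q := List.replicate (n - 1) e)
    (by simp; omega)
  simp only [mulLeftList_replicate, map_add,
    pow_apply_eq_of_mul_mem_peirce1 hZ (show n - 1 ≠ 0 by omega)] at hpad
  have hD' := pow_apply_mem_peirceHalf hD (n - 1)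
  refine eq_zero_of_pow_apply_eq_zero hD <| eq_zero_of_pow_apply_eq_zero hD' (k := n - 2) <|
    hcond3 _ (pow_apply_mem_peirceHalf hD' _) fun u hu => ?_
  have hu' := hmul.map_mulLeftList_of_map_eq_add hpad (q := u :: List.replicate (n - 2) e)
    (by simp; omega)
  simp only [mulLeftList_cons, mulLeftList_replicate, AddMonoid.End.coe_mul, Function.comp_apply,
    mulLeft_apply, map_add, pow_apply_of_mem_peirce1 hZ,
    mul_eq_zero_of_mem_peirce0_of_mem_peirce1 h2 hid hu hZ, add_zero, hφ0] at hu'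
  exact add_eq_left.mp (hbij.injective hu')

theorem sub_mem_peirce1_of_map_eq_add
    (hcond2 : ∀ a ∈ peirce0 e, (∀ t ∈ peirce0 e, t * a = 0) → a = 0)
    (hcond3 : ∀ a ∈ peirceHalf e, (∀ t ∈ peirce0 e, t * a = 0) → a = 0)
    {a b m c : J} (ha : a ∈ peirce1 e) (hb : b ∈ peirce1 e) (hm : m ∈ peirceHalf e)
    (hc : φ c = φ a + φ (b + m)) : c - m ∈ peirce1 e := by
  have hφ0 := hmul.map_zero hn hbij.surjective
  obtain ⟨c₁, hc₁, ch, hch, c₀, hc₀, rfl⟩ := exists_peirce_decomposition h2 hid c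
  have hJ0 : ∀ t ∈ peirce0 e, ∀ x ∈ peirce0 e, t * x ∈ peirce0 e := fun t ht x hx =>
    mul_mem_peirce0 h2 hid ht
      (by rw [show e * x = 0 from hx]; exact (peirce1AddSubgroup e).zero_mem)
  have hJh : ∀ t ∈ peirce0 e, ∀ x ∈ peirceHalf e, t * x ∈ peirceHalf e := fun t ht x hx =>
    mul_comm x t ▸ mul_mem_peirceHalf_of_mem_peirce0 h2 hid hx ht
  -- Words in `J₀` of length `n - 1` kill `J₁`, so they only see the `J_½`- and `J₀`-parts.
  have hq : ∀ q : List J, q.length = n - 1 → (∀ t ∈ q, t ∈ peirce0 e) →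
      mulLeftList q ch = mulLeftList q m ∧ mulLeftList q c₀ = 0 := by
    intro q hlen hq
    have hne : q ≠ [] := by rintro rfl; simp at hlen; omega
    have hkill (x : J) (hx : x ∈ peirce1 e) : mulLeftList q x = 0 :=
      mulLeftList_apply_eq_zero_of_mem_peirce1 h2 hid hne hq hx
    have h := hmul.map_mulLeftList_of_map_eq_add hc (q := q) (by omega)
    simp only [map_add, hkill _ hc₁, hkill _ ha, hkill _ hb, zero_add, hφ0] at h
    exact (peirce_eq_of_add_add_eq (peirce1AddSubgroup e).zero_mem
      (peirce1AddSubgroup e).zero_mem (mulLeftList_apply_mem hJh hq hch)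
      (mulLeftList_apply_mem hJh hq hm) (mulLeftList_apply_mem hJ0 hq hc₀)
      (peirce0AddSubgroup e).zero_mem (by simpa only [zero_add, add_zero] using hbij.injective h)).2
  have hchm : ch = m := sub_eq_zero.mp <|
    eq_zero_of_forall_mulLeftList_apply_eq_zero hJh hcond3 (n - 1)
      ((peirceHalfAddSubgroup e).sub_mem hch hm) fun q hl hq' => by
        rw [map_sub, (hq q hl hq').1, sub_self]
  have hc₀0 : c₀ = 0 :=
    eq_zero_of_forall_mulLeftList_apply_eq_zero hJ0 hcond2 (n - 1) hc₀ fun q hl hq' =>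
      (hq q hl hq').2
  rwa [hchm, hc₀0, add_zero, add_sub_cancel_right]

theorem map_add_of_mem_peirce1_of_mem_peirceHalf
    (hcond1 : ∀ a ∈ peirce1 e, (∀ t ∈ peirceHalf e, t * a = 0) → a = 0)
    (hcond2 : ∀ a ∈ peirce0 e, (∀ t ∈ peirce0 e, t * a = 0) → a = 0)
    (hcond3 : ∀ a ∈ peirceHalf e, (∀ t ∈ peirce0 e, t * a = 0) → a = 0)
    {a m : J} (ha : a ∈ peirce1 e) (hm : m ∈ peirceHalf e) : φ (a + m) = φ a + φ m := by
  obtain ⟨c, hc⟩ := hbij.surjective (φ a + φ m)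
  have hcm : c - m ∈ peirce1 e := sub_mem_peirce1_of_map_eq_add h2 hid hn hbij hmul hcond2
    hcond3 ha (peirce1AddSubgroup e).zero_mem hm (by rwa [zero_add])
  have hcma := (peirce1AddSubgroup e).sub_mem hcm ha
  suffices c - m = a by rw [← hc, ← this, sub_add_cancel]
  refine sub_eq_zero.mp (hcond1 _ hcma fun t ht => ?_)
  have h := hmul.map_mulLeftList_of_map_eq_add hc (q := t :: List.replicate (n - 2) e)
    (by simp; omega)
  simp only [mulLeftList_cons, mulLeftList_replicate, AddMonoid.End.coe_mul, Function.comp_apply,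
    mulLeft_apply, pow_apply_of_mem_peirce1 ha] at h
  have hsplit : t * (L e ^ (n - 2)) c = t * a + t * (c - m - a) + t * (L e ^ (n - 2)) m := by
    conv_lhs => rw [← sub_add_cancel c m, map_add, pow_apply_of_mem_peirce1 hcm]
    rw [mul_add, mul_sub t (c - m) a]
    abel
  rw [hsplit] at h
  exact eq_zero_of_map_add_add_eq h2 hid hn hbij hmul hcond3
    (mul_mem_peirceHalf_of_mem_peirce1 h2 hid ht hcma)
    (mul_mul_mem_peirce1_of_mem_peirceHalf h2 hid ht (pow_apply_mem_peirceHalf hm _)) h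

theorem map_add_of_mem_peirce0_of_mem_peirceHalf
    (hcond1' : ∀ a ∈ peirce0 e, (∀ t ∈ peirceHalf e, t * a = 0) → a = 0)
    (hcond3 : ∀ a ∈ peirceHalf e, (∀ t ∈ peirce0 e, t * a = 0) → a = 0)
    {w m : J} (hw : w ∈ peirce0 e) (hm : m ∈ peirceHalf e) : φ (w + m) = φ w + φ m := by
  have hφ0 := hmul.map_zero hn hbij.surjective
  obtain ⟨c, hc⟩ := hbij.surjective (φ w + φ m)
  obtain ⟨c₁, hc₁, ch, hch, c₀, hc₀, rfl⟩ := exists_peirce_decomposition h2 hid c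
  have h := hmul.map_mulLeftList_of_map_eq_add hc (q := List.replicate (n - 1) e)
    (by simp; omega)
  simp only [mulLeftList_replicate, map_add, pow_apply_of_mem_peirce1 hc₁,
    pow_apply_of_mem_peirce0 hc₀ (show n - 1 ≠ 0 by omega),
    pow_apply_of_mem_peirce0 hw (show n - 1 ≠ 0 by omega), hφ0, zero_add, add_zero] at h
  obtain ⟨rfl, hchm, -⟩ := peirce_eq_of_add_add_eq hc₁ (peirce1AddSubgroup e).zero_mem
    (pow_apply_mem_peirceHalf hch _) (pow_apply_mem_peirceHalf hm _)
    (peirce0AddSubgroup e).zero_mem (peirce0AddSubgroup e).zero_mem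
    (by simpa only [zero_add, add_zero] using hbij.injective h)
  obtain rfl : ch = m := sub_eq_zero.mp <| eq_zero_of_pow_apply_eq_zero
    ((peirceHalfAddSubgroup e).sub_mem hch hm) (by rw [map_sub, hchm, sub_self])
  suffices c₀ = w by rwa [this, zero_add, add_comm] at hc
  have hc₀w := (peirce0AddSubgroup e).sub_mem hc₀ hw
  refine sub_eq_zero.mp (hcond1' _ hc₀w fun t ht => ?_)
  have h' := hmul.map_mulLeftList_of_map_eq_add hc (q := List.replicate (n - 2) e ++ [t])
    (by simp; omega)
  simp only [mulLeftList_append, mulLeftList_replicate, mulLeftList_cons, mulLeftList_nil,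
    mul_one, AddMonoid.End.coe_mul, Function.comp_apply, mulLeft_apply] at h'
  have hsplit : (L e ^ (n - 2)) (t * (0 + ch + c₀)) = (L e ^ (n - 2)) (t * w)
      + (L e ^ (n - 2)) (t * (c₀ - w)) + (L e ^ (n - 2)) (t * ch) := by
    rw [← map_add, ← map_add, zero_add, mul_sub, mul_add]
    abel_nf
  rw [hsplit] at h'
  have htch := mul_mul_mem_peirce1_of_mem_peirceHalf h2 hid ht hm
  have hZ : e * (L e ^ (n - 2)) (t * ch) ∈ peirce1 e := by
    have hcomm : e * (L e ^ (n - 2)) (t * ch) = (L e ^ (n - 2)) (e * (t * ch)) :=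
      congrArg (· (t * ch)) (Commute.self_pow (L e) (n - 2)).eq
    rw [hcomm, pow_apply_of_mem_peirce1 htch]
    exact htch
  have htd := mul_mem_peirceHalf_of_mem_peirce0 h2 hid ht hc₀w
  exact eq_zero_of_pow_apply_eq_zero htd <| eq_zero_of_map_add_add_eq h2 hid hn hbij hmul hcond3
    (pow_apply_mem_peirceHalf htd _) hZ h'

theorem map_mul_mul_add_mul_mul
    (hcond1 : ∀ a ∈ peirce1 e, (∀ t ∈ peirceHalf e, t * a = 0) → a = 0)
    (hcond1' : ∀ a ∈ peirce0 e, (∀ t ∈ peirceHalf e, t * a = 0) → a = 0)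
    (hcond2 : ∀ a ∈ peirce0 e, (∀ t ∈ peirce0 e, t * a = 0) → a = 0)
    (hcond3 : ∀ a ∈ peirceHalf e, (∀ t ∈ peirce0 e, t * a = 0) → a = 0)
    {t u a b : J} (ht : t ∈ peirceHalf e) (hu : u ∈ peirce0 e) (ha : a ∈ peirce1 e)
    (hb : b ∈ peirce1 e) :
    φ (u * (t * a) + u * (t * b)) = φ (u * (t * a)) + φ (u * (t * b)) := by
  have hφ0 := hmul.map_zero hn hbij.surjective
  -- Expand `φ (u * ((a + t) * (b + t)))` by additivity on `J₁ + J_½`; then split off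
  -- `u * (t * t) ∈ J₀` by additivity on `J₀ + J_½`.
  have hadd₁ {x m : J} (hx : x ∈ peirce1 e) (hm : m ∈ peirceHalf e) :=
    map_add_of_mem_peirce1_of_mem_peirceHalf h2 hid hn hbij hmul hcond1 hcond2 hcond3 hx hm
  obtain ⟨s, hs, hst⟩ := exists_pow_apply_eq ht (n - 3)
  have h := hmul.map_mul_mul_pow_apply hn e u (a + t) (b + s)
  rw [hadd₁ ha ht, hadd₁ hb hs] at h
  simp only [map_add, mul_add, add_mul, ← hmul.map_mul_mul_pow_apply hn, hst,
    pow_apply_of_mem_peirce1 hb] at h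
  rw [mul_eq_zero_of_mem_peirce0_of_mem_peirce1 h2 hid hu (mul_mem_peirce1 h2 hid ha hb), hφ0,
    mul_comm a t] at h
  have hW : u * (t * t) ∈ peirce0 e :=
    mul_mem_peirce0 h2 hid hu (mul_mul_mem_peirce1_of_mem_peirceHalf h2 hid ht ht)
  have hJh {x : J} (hx : x ∈ peirce1 e) : u * (t * x) ∈ peirceHalf e :=
    mul_comm (t * x) u ▸ mul_mem_peirceHalf_of_mem_peirce0 h2 hid
      (mul_mem_peirceHalf_of_mem_peirce1 h2 hid ht hx) hu
  rw [show 0 + u * (t * b) + (u * (t * a) + u * (t * t))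
      = u * (t * t) + (u * (t * a) + u * (t * b)) by abel,
    map_add_of_mem_peirce0_of_mem_peirceHalf h2 hid hn hbij hmul hcond1' hcond3 hW
      ((peirceHalfAddSubgroup e).add_mem (hJh ha) (hJh hb))] at h
  apply add_left_cancel (a := φ (u * (t * t)))
  rw [h]
  abel

end Additivity

theorem nMulIso_additive_on_one_general {J J' : Type*} [NonUnitalNonAssocCommRing J] [NonUnitalNonAssocCommRing J']
    (hJordan : ∀ x y : J, ((x * x) * y) * x = (x * x) * (y * x))
    (h2 : ∀ x : J, x + x = 0 → x = 0)
    (e : J) (hid : e * e = e)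
    (hcond1 : ∀ a ∈ peirce1 e, (∀ t ∈ peirceHalf e, t * a = 0) → a = 0)
    (hcond1' : ∀ a ∈ peirce0 e, (∀ t ∈ peirceHalf e, t * a = 0) → a = 0)
    (hcond2 : ∀ a ∈ peirce0 e, (∀ t ∈ peirce0 e, t * a = 0) → a = 0)
    (hcond3 : ∀ a ∈ peirceHalf e, (∀ t ∈ peirce0 e, t * a = 0) → a = 0)
    (n : ℕ) (hn : 2 ≤ n) (φ : J → J')
    (hbij : Function.Bijective φ) (hmul : IsNMulMap n φ) :
    ∀ a ∈ peirce1 e, ∀ b ∈ peirce1 e,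
      φ (a + b) = φ a + φ b := by
  have : IsCommJordan J := ⟨fun a b => by
    rw [mul_comm a (b * (a * a)), mul_comm b (a * a), hJordan, mul_comm b a, mul_comm (a * a)]⟩
  intro a ha b hb
  obtain ⟨c, hc⟩ := hbij.surjective (φ a + φ b)
  have hc₁ : c ∈ peirce1 e := by
    simpa using sub_mem_peirce1_of_map_eq_add h2 hid hn hbij hmul hcond2 hcond3 ha hb
      (peirceHalfAddSubgroup e).zero_mem (by rwa [add_zero])
  have hd := (peirce1AddSubgroup e).sub_mem ((peirce1AddSubgroup e).sub_mem hc₁ ha) hb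
  suffices c - a - b = 0 by rw [sub_sub, sub_eq_zero] at this; rw [← this, hc]
  refine hcond1 _ hd fun t ht => hcond3 _ (mul_mem_peirceHalf_of_mem_peirce1 h2 hid ht hd)
    fun u hu => ?_
  have h := hmul.map_mul_mul_pow_apply_of_map_eq_add hn hc e u t
  rw [pow_apply_of_mem_peirce1 hc₁, pow_apply_of_mem_peirce1 ha, pow_apply_of_mem_peirce1 hb,
    ← map_mul_mul_add_mul_mul h2 hid hn hbij hmul hcond1 hcond1' hcond2 hcond3 ht hu ha hb] at h
  rw [mul_sub, mul_sub, mul_sub, mul_sub, hbij.injective h]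
  abel

theorem nMulIso_additive_on_one {J J' : Type*} [NonUnitalNonAssocCommRing J] [NonUnitalNonAssocCommRing J']
    (hJordan : ∀ x y : J, ((x * x) * y) * x = (x * x) * (y * x))
    (hJordan' : ∀ x y : J', ((x * x) * y) * x = (x * x) * (y * x))
    (h2 : ∀ x : J, x + x = 0 → x = 0)
    (e : J) (hid : e * e = e) (hne : e ≠ 0) (hnu : ∃ x : J, e * x ≠ x)
    (hcond1 : ∀ a ∈ peirce1 e, (∀ t ∈ peirceHalf e, t * a = 0) → a = 0)
    (hcond1' : ∀ a ∈ peirce0 e, (∀ t ∈ peirceHalf e, t * a = 0) → a = 0)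
    (hcond2 : ∀ a ∈ peirce0 e, (∀ t ∈ peirce0 e, t * a = 0) → a = 0)
    (hcond3 : ∀ a ∈ peirceHalf e, (∀ t ∈ peirce0 e, t * a = 0) → a = 0)
    (n : ℕ) (hn : 2 ≤ n) (φ : J → J')
    (hbij : Function.Bijective φ) (hmul : IsNMulMap n φ) :
    ∀ a ∈ peirce1 e, ∀ b ∈ peirce1 e,
      φ (a + b) = φ a + φ b :=
  nMulIso_additive_on_one_general hJordan h2 e hid hcond1 hcond1' hcond2 hcond3 n hn φ hbij hmul
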